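/- arXiv:1312.0533 — 7 statements merged into one kernel-verified Lean document; each statement's English description precedes it below -/
import Mathlib

section
/- Let T ≥ 0, let W : [0,T] → ℝ be continuous, let w ∈ ℂ with Im w > 0, and let g be a solution of the chordal Loewner ODE started at w on [0,T]. Then for every t ∈ [0,T] one has (Im g(t))² ≥ (Im w)² − 4t. In particular, if Im w ≥ 3√T, then Im g(t) ≥ 2√t for all t ∈ [0,T]. -/
open Set

/-- `IsLoewnerSolution T W w g` means that `g` is a solution of the chordal Loewner ODE
`g'(t) = 2 / (g(t) - W(t))` on `[0,T]`, started at `w`, staying in the open upper half-plane. -/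
def IsLoewnerSolution (T : ℝ) (W : ℝ → ℝ) (w : ℂ) (g : ℝ → ℂ) : Prop :=
  g 0 = w ∧ ∀ t ∈ Icc 0 T,
    HasDerivWithinAt g (2 / (g t - (W t : ℂ))) (Icc 0 T) t ∧ 0 < (g t).im

/-!
Along the Loewner flow `d/dt Im g = Im (2 / (g - W)) = -2 Im g / |g - W|²`, so
`d/dt (Im g)² = -4 (Im g)² / |g - W|² ≥ -4` because `|Im (g - W)| ≤ |g - W|`.
Hence `(Im g)² + 4t` is nondecreasing, which gives `(Im g(t))² ≥ (Im w)² - 4t`;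
when `Im w ≥ 3√T` the right-hand side is at least `9T - 4t ≥ 4t`.
-/

theorem Complex.neg_one_le_im_mul_inv_im (z : ℂ) : -1 ≤ z.im * z⁻¹.im := by
  rw [Complex.inv_im, mul_div_assoc', mul_neg, neg_div, neg_le_neg_iff, ← sq]
  exact div_le_one_of_le₀ (by rw [Complex.normSq_apply]; nlinarith [sq_nonneg z.re])
    (Complex.normSq_nonneg z)

namespace IsLoewnerSolution

variable {T : ℝ} {W : ℝ → ℝ} {w : ℂ} {g : ℝ → ℂ}

theorem hasDerivWithinAt_im_sq_add (hg : IsLoewnerSolution T W w g) {t : ℝ} (ht : t ∈ Icc 0 T) :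
    HasDerivWithinAt (fun s ↦ (g s).im ^ 2 + 4 * s)
      (4 * ((g t - W t).im * (g t - W t)⁻¹.im + 1)) (Icc 0 T) t := by
  have him : HasDerivWithinAt (fun s ↦ (g s).im) (2 / (g t - W t)).im (Icc 0 T) t :=
    Complex.imCLM.hasFDerivAt.comp_hasDerivWithinAt t (hg.2 t ht).1
  refine ((him.pow 2).add ((hasDerivWithinAt_id t _).const_mul 4)).congr_deriv ?_
  simp only [div_eq_mul_inv, Complex.mul_im, Complex.sub_im, Complex.ofReal_im]
  norm_num
  ring

theorem monotoneOn_im_sq_add (hg : IsLoewnerSolution T W w g) :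
    MonotoneOn (fun t ↦ (g t).im ^ 2 + 4 * t) (Icc 0 T) := by
  have hderiv := fun t (ht : t ∈ Icc 0 T) ↦ hg.hasDerivWithinAt_im_sq_add ht
  refine monotoneOn_of_hasDerivWithinAt_nonneg (convex_Icc 0 T)
    (fun t ht ↦ (hderiv t ht).continuousWithinAt)
    (fun t ht ↦ (hderiv t (interior_subset ht)).mono interior_subset) fun t _ ↦ ?_
  linarith [Complex.neg_one_le_im_mul_inv_im (g t - W t)]

theorem im_sq_sub_four_mul_le (hg : IsLoewnerSolution T W w g) {t : ℝ} (ht : t ∈ Icc 0 T) :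
    w.im ^ 2 - 4 * t ≤ (g t).im ^ 2 := by
  have := hg.monotoneOn_im_sq_add ⟨le_rfl, ht.1.trans ht.2⟩ ht ht.1
  simp only [hg.1, mul_zero, add_zero] at this
  linarith

end IsLoewnerSolution

theorem two_mul_sqrt_le_of_sq_sub_le {a b t T : ℝ} (ha : 0 ≤ a) (ht : 0 ≤ t) (htT : t ≤ T)
    (hb : 3 * √T ≤ b) (h : b ^ 2 - 4 * t ≤ a ^ 2) : 2 * √t ≤ a := by
  have hb2 : 9 * T ≤ b ^ 2 := by
    have := pow_le_pow_left₀ (by positivity) hb 2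
    rw [mul_pow, Real.sq_sqrt (ht.trans htT)] at this
    linarith
  refine (pow_le_pow_iff_left₀ (by positivity) ha two_ne_zero).1 ?_
  rw [mul_pow, Real.sq_sqrt ht]
  linarith

theorem im_sq_ge_of_loewner_general (T : ℝ) (W : ℝ → ℝ)
    (w : ℂ) (g : ℝ → ℂ)
    (hg : IsLoewnerSolution T W w g) :
    ∀ t ∈ Icc 0 T, (g t).im ^ 2 ≥ w.im ^ 2 - 4 * t ∧
      (w.im ≥ 3 * Real.sqrt T → (g t).im ≥ 2 * Real.sqrt t) := fun t ht ↦
  ⟨hg.im_sq_sub_four_mul_le ht, fun hw ↦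
    two_mul_sqrt_le_of_sq_sub_le (hg.2 t ht).2.le ht.1 ht.2 hw (hg.im_sq_sub_four_mul_le ht)⟩

theorem im_sq_ge_of_loewner (T : ℝ) (hT : 0 ≤ T) (W : ℝ → ℝ)
    (hW : ContinuousOn W (Icc 0 T)) (w : ℂ) (hw : 0 < w.im) (g : ℝ → ℂ)
    (hg : IsLoewnerSolution T W w g) :
    ∀ t ∈ Icc 0 T, (g t).im ^ 2 ≥ w.im ^ 2 - 4 * t ∧
      (w.im ≥ 3 * Real.sqrt T → (g t).im ≥ 2 * Real.sqrt t) :=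
  im_sq_ge_of_loewner_general T W w g hg
end

section
/- Let W : [0,∞) → ℝ be continuous and let w ∈ ℂ with Im w > 0. Then for every T with 0 ≤ T < (Im w)²/4, there exists a solution g of the chordal Loewner ODE started at w on [0,T]; that is, the solution of the Loewner equation started at a point w of the upper half-plane exists (and stays in the open upper half-plane) at least up to time (Im w)²/4. -/
/-! The vector field `2 / (z - W t)` is modified below height `ε = √((Im w)² - 4T)` by replacing
`Im z` with `max (Im z) ε`; the modified field is bounded and globally Lipschitz, so by
Picard–Lindelöf it has a solution `g` on all of `[0, T]`. Along it,
`d/dt (Im g)² = 2 Im g · Im (2 / (g - W)) ≥ -4`, hence `(Im g t)² ≥ (Im w)² - 4t ≥ ε²`, and by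
continuity `Im g ≥ ε` throughout. So `g` never sees the modification and solves the Loewner
equation itself. -/

open Set

open scoped NNReal

theorem exists_forall_mem_Icc_hasDerivWithinAt_of_norm_le
    {E : Type*} [NormedAddCommGroup E] [NormedSpace ℝ E] [CompleteSpace E]
    {f : ℝ → E → E} {T C : ℝ} (hT : 0 ≤ T) {K : ℝ≥0}
    (hlip : ∀ t ∈ Icc 0 T, LipschitzWith K (f t)) (hcont : ∀ x, ContinuousOn (f · x) (Icc 0 T))
    (hbound : ∀ t ∈ Icc 0 T, ∀ x, ‖f t x‖ ≤ C) (x₀ : E) :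
    ∃ α : ℝ → E, α 0 = x₀ ∧ ∀ t ∈ Icc 0 T, HasDerivWithinAt α (f t (α t)) (Icc 0 T) t :=
  have hpl : IsPicardLindelof f (tmin := 0) (tmax := T) ⟨0, left_mem_Icc.2 hT⟩ x₀
      (C.toNNReal * T.toNNReal) 0 C.toNNReal K :=
    { lipschitzOnWith := fun t ht => (hlip t ht).lipschitzOnWith
      continuousOn := fun x _ => hcont x
      norm_le := fun t ht x _ => (hbound t ht x).trans (Real.le_coe_toNNReal C)
      mul_max_le := by simp [max_eq_left hT, Real.coe_toNNReal _ hT] }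
  hpl.exists_eq_forall_mem_Icc_hasDerivWithinAt₀

theorem sq_sub_mul_le_sq_of_hasDerivWithinAt {u u' : ℝ → ℝ} {a b c : ℝ}
    (hu : ∀ t ∈ Icc a b, HasDerivWithinAt u (u' t) (Icc a b) t)
    (hc : ∀ t ∈ Icc a b, -c ≤ u t * u' t) {t : ℝ} (ht : t ∈ Icc a b) :
    u a ^ 2 - 2 * c * (t - a) ≤ u t ^ 2 := by
  have hmono : MonotoneOn (fun s => u s ^ 2 + 2 * c * s) (Icc a b) := by
    have hderiv : ∀ s ∈ Icc a b, HasDerivWithinAt (fun s => u s ^ 2 + 2 * c * s)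
        (2 * u s * u' s + 2 * c) (Icc a b) s := fun s hs => by
      simpa using ((hu s hs).fun_pow 2).fun_add ((hasDerivWithinAt_id s _).const_mul (2 * c))
    refine monotoneOn_of_hasDerivWithinAt_nonneg (f' := fun s => 2 * u s * u' s + 2 * c)
      (convex_Icc a b) (fun s hs => (hderiv s hs).continuousWithinAt) (fun s hs => ?_)
      (fun s hs => ?_)
    · exact (hderiv s (interior_subset hs)).mono interior_subset
    · linarith [hc s (interior_subset hs)]
  have : u a ^ 2 + 2 * c * a ≤ u t ^ 2 + 2 * c * t :=
    hmono (left_mem_Icc.2 (ht.1.trans ht.2)) ht ht.1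
  linarith

theorem le_of_sq_le_sq_of_continuousOn {u : ℝ → ℝ} {a b ε : ℝ} (hε : 0 < ε)
    (hu : ContinuousOn u (Icc a b)) (ha : 0 < u a) (hsq : ∀ t ∈ Icc a b, ε ^ 2 ≤ u t ^ 2)
    {t : ℝ} (ht : t ∈ Icc a b) : ε ≤ u t := by
  by_contra! hlt
  have hneg : u t < 0 := by nlinarith [hsq t ht]
  obtain ⟨s, hs, hs0⟩ : (0 : ℝ) ∈ u '' Icc a b :=
    (isPreconnected_Icc.image u hu).Icc_subset (mem_image_of_mem u ht)
      (mem_image_of_mem u (left_mem_Icc.2 (ht.1.trans ht.2))) ⟨hneg.le, ha.le⟩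
  nlinarith [hsq s hs]

def clampIm (ε : ℝ) (z : ℂ) : ℂ := ⟨z.re, max z.im ε⟩

@[simp] theorem clampIm_re (ε : ℝ) (z : ℂ) : (clampIm ε z).re = z.re := rfl

@[simp] theorem clampIm_im (ε : ℝ) (z : ℂ) : (clampIm ε z).im = max z.im ε := rfl

theorem clampIm_of_le {ε : ℝ} {z : ℂ} (h : ε ≤ z.im) : clampIm ε z = z :=
  Complex.ext rfl (max_eq_left h)

theorem dist_clampIm_le (ε : ℝ) (z₁ z₂ : ℂ) : dist (clampIm ε z₁) (clampIm ε z₂) ≤ dist z₁ z₂ := by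
  rw [Complex.dist_eq_re_im, Complex.dist_eq_re_im, clampIm_re, clampIm_re, clampIm_im, clampIm_im]
  refine Real.sqrt_le_sqrt (add_le_add_right (sq_le_sq.2 ?_) _)
  simpa using abs_max_sub_max_le_abs z₁.im z₂.im ε

theorem le_norm_clampIm_sub_ofReal (ε : ℝ) (z : ℂ) (x : ℝ) : ε ≤ ‖clampIm ε z - x‖ :=
  calc ε ≤ |(clampIm ε z - x).im| := by simpa using (le_max_right _ _).trans (le_abs_self _)
    _ ≤ ‖clampIm ε z - x‖ := Complex.abs_im_le_norm _

noncomputable def clampedLoewnerField (W : ℝ → ℝ) (ε t : ℝ) (z : ℂ) : ℂ := 2 / (clampIm ε z - W t)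

section
variable (W : ℝ → ℝ) {ε : ℝ} (hε : 0 < ε)
include hε

theorem norm_clampedLoewnerField_le (t : ℝ) (z : ℂ) : ‖clampedLoewnerField W ε t z‖ ≤ 2 / ε := by
  rw [clampedLoewnerField, norm_div, Complex.norm_ofNat]
  exact div_le_div_of_nonneg_left zero_le_two hε (le_norm_clampIm_sub_ofReal ε z (W t))


theorem lipschitzWith_clampedLoewnerField (t : ℝ) :
    LipschitzWith (2 / ε ^ 2).toNNReal (clampedLoewnerField W ε t) := by
  refine LipschitzWith.of_dist_le_mul fun z₁ z₂ => ?_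
  set ζ₁ := clampIm ε z₁ - W t
  set ζ₂ := clampIm ε z₂ - W t
  have h₁ : ε ≤ ‖ζ₁‖ := le_norm_clampIm_sub_ofReal ε z₁ (W t)
  have h₂ : ε ≤ ‖ζ₂‖ := le_norm_clampIm_sub_ofReal ε z₂ (W t)
  have hζ : dist ζ₁ ζ₂ ≤ dist z₁ z₂ := by
    rw [dist_sub_right]; exact dist_clampIm_le ε z₁ z₂
  have key : dist (2 / ζ₁) (2 / ζ₂) ≤ ((2 / ε ^ 2).toNNReal : ℝ) * dist z₁ z₂ := calc
    dist (2 / ζ₁) (2 / ζ₂) = 2 * (dist ζ₁ ζ₂ / (‖ζ₁‖ * ‖ζ₂‖)) := by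
        rw [div_eq_mul_inv, div_eq_mul_inv, ← smul_eq_mul, ← smul_eq_mul, dist_smul₀,
          dist_inv_inv₀ (norm_pos_iff.1 (hε.trans_le h₁)) (norm_pos_iff.1 (hε.trans_le h₂)),
          Complex.norm_ofNat]
    _ ≤ 2 * (dist z₁ z₂ / (ε * ε)) := by gcongr
    _ = ((2 / ε ^ 2).toNNReal : ℝ) * dist z₁ z₂ := by
        rw [Real.coe_toNNReal _ (by positivity)]; ring
  exact key

theorem continuousOn_clampedLoewnerField {s : Set ℝ} (hW : ContinuousOn W s) (z : ℂ) :
    ContinuousOn (clampedLoewnerField W ε · z) s :=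
  continuousOn_const.div (continuousOn_const.sub (Complex.continuous_ofReal.comp_continuousOn hW))
    fun t _ h => by simpa [h, hε.not_ge] using le_norm_clampIm_sub_ofReal ε z (W t)

theorem neg_two_le_im_mul_im_clampedLoewnerField (t : ℝ) (z : ℂ) :
    -2 ≤ z.im * (clampedLoewnerField W ε t z).im := by
  set m := max z.im ε
  have hm : 0 < m := hε.trans_le (le_max_right _ _)
  have hN : Complex.normSq (clampIm ε z - W t) = (z.re - W t) ^ 2 + m ^ 2 := by
    simp [Complex.normSq_apply, m]; ring
  have him : (clampedLoewnerField W ε t z).im = -2 * m / ((z.re - W t) ^ 2 + m ^ 2) := by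
    simp [clampedLoewnerField, Complex.div_im, hN, m]; ring
  rw [him, mul_div_assoc', le_div_iff₀ (by positivity)]
  nlinarith [sq_nonneg (z.re - W t), mul_le_mul_of_nonneg_left (le_max_left z.im ε) hm.le]

end

theorem loewner_solution_exists (W : ℝ → ℝ) (hW : ContinuousOn W (Ici 0))
    (w : ℂ) (hw : 0 < w.im) :
    ∀ T : ℝ, 0 ≤ T → T < w.im ^ 2 / 4 → ∃ g : ℝ → ℂ, IsLoewnerSolution T W w g := by
  intro T hT0 hT
  set ε := √(w.im ^ 2 - 4 * T)
  have hε : 0 < ε := Real.sqrt_pos.2 (by linarith)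
  have hε2 : ε ^ 2 = w.im ^ 2 - 4 * T := Real.sq_sqrt (by linarith)
  obtain ⟨g, hg0, hg⟩ := exists_forall_mem_Icc_hasDerivWithinAt_of_norm_le hT0
    (fun t _ => lipschitzWith_clampedLoewnerField W hε t)
    (continuousOn_clampedLoewnerField W hε (hW.mono Icc_subset_Ici_self))
    (fun t _ z => norm_clampedLoewnerField_le W hε t z) w
  have hgim : ∀ t ∈ Icc 0 T, HasDerivWithinAt (fun s => (g s).im)
      (clampedLoewnerField W ε t (g t)).im (Icc 0 T) t := fun t ht =>
    Complex.imCLM.hasFDerivAt.comp_hasDerivWithinAt t (hg t ht)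
  have hε_le : ∀ t ∈ Icc 0 T, ε ≤ (g t).im := by
    refine fun t ht => le_of_sq_le_sq_of_continuousOn hε
      (fun s hs => (hgim s hs).continuousWithinAt) (by simpa [hg0]) (fun s hs => ?_) ht
    have := sq_sub_mul_le_sq_of_hasDerivWithinAt hgim
      (fun s _ => neg_two_le_im_mul_im_clampedLoewnerField W hε s (g s)) hs
    rw [hg0] at this
    nlinarith [hs.2]
  refine ⟨g, hg0, fun t ht => ⟨?_, hε.trans_le (hε_le t ht)⟩⟩
  simpa [clampedLoewnerField, clampIm_of_le (hε_le t ht)] using hg t ht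
end

section
/- Let T ≥ 0, let W : [0,T] → ℝ be continuous, let w ∈ ℂ with (Im w)² > 4T and Im w > 0, and let g be a solution of the chordal Loewner ODE started at w on [0,T]. Then g is Lipschitz in time: for all s, t ∈ [0,T] with s ≤ t, |g(t) − g(s)| ≤ 2(t − s)/√((Im w)² − 4T). -/
open Set

namespace Complex

lemma neg_four_le_two_mul_im_mul_im_two_div (z : ℂ) : -4 ≤ 2 * z.im * (2 / z).im := by
  rcases eq_or_ne z 0 with rfl | hz
  · norm_num
  have hpos : 0 < normSq z := normSq_pos.2 hz
  have him_sq_le : z.im ^ 2 / normSq z ≤ 1 :=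
    div_le_one_of_le₀ (by rw [normSq_apply]; nlinarith [mul_self_nonneg z.re]) hpos.le
  have him : 2 * z.im * (2 / z).im = -4 * (z.im ^ 2 / normSq z) := by
    rw [div_eq_mul_inv, mul_im, inv_im, inv_re, re_ofNat, im_ofNat]
    ring
  linarith

lemma norm_two_div_le_of_le_im {z : ℂ} {c : ℝ} (hc : 0 < c) (hz : c ≤ z.im) :
    ‖2 / z‖ ≤ 2 / c := by
  rw [norm_div, norm_ofNat]
  exact div_le_div_of_nonneg_left zero_le_two hc (hz.trans (im_le_norm z))

end Complex

theorem monotoneOn_im_sq_add_four_mul_of_loewner {D : Set ℝ} {W : ℝ → ℝ} {g : ℝ → ℂ}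
    (hD : Convex ℝ D) (hg : ∀ t ∈ D, HasDerivWithinAt g (2 / (g t - W t)) D t) :
    MonotoneOn (fun t => (g t).im ^ 2 + 4 * t) D := by
  have hderiv : ∀ t ∈ D, HasDerivWithinAt (fun t => (g t).im ^ 2 + 4 * t)
      (2 * (g t - W t).im * (2 / (g t - W t)).im + 4) D t := by
    intro t ht
    have him := Complex.imCLM.hasFDerivAt.comp_hasDerivWithinAt t (hg t ht)
    exact ((him.pow 2).add ((hasDerivWithinAt_id t D).const_mul 4)).congr_deriv (by simp)
  refine monotoneOn_of_hasDerivWithinAt_nonneg hD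
    (fun t ht => (hderiv t ht).continuousWithinAt)
    (fun t ht => (hderiv t (interior_subset ht)).mono interior_subset) fun t _ => ?_
  linarith [Complex.neg_four_le_two_mul_im_mul_im_two_div (g t - W t)]

theorem IsLoewnerSolution.sqrt_im_sq_sub_le_im {T : ℝ} {W : ℝ → ℝ} {w : ℂ} {g : ℝ → ℂ}
    (hg : IsLoewnerSolution T W w g) {t : ℝ} (ht : t ∈ Icc 0 T) :
    √(w.im ^ 2 - 4 * T) ≤ (g t).im := by
  obtain ⟨hg0, hgt⟩ := hg
  have hmono :=
    monotoneOn_im_sq_add_four_mul_of_loewner (convex_Icc 0 T) fun u hu => (hgt u hu).1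
  have h0t := hmono ⟨le_rfl, ht.1.trans ht.2⟩ ht ht.1
  simp only [hg0, mul_zero, add_zero] at h0t
  exact Real.sqrt_le_iff.2 ⟨(hgt t ht).2.le, by linarith [ht.2]⟩

theorem loewner_lipschitz_in_time_general (T : ℝ) (W : ℝ → ℝ)
    (w : ℂ) (hw4 : w.im ^ 2 > 4 * T)
    (g : ℝ → ℂ) (hg : IsLoewnerSolution T W w g) :
    ∀ s ∈ Icc 0 T, ∀ t ∈ Icc 0 T, s ≤ t →
      ‖g t - g s‖ ≤ 2 * (t - s) / Real.sqrt (w.im ^ 2 - 4 * T) := by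
  intro s hs t ht hst
  have hc : 0 < √(w.im ^ 2 - 4 * T) := Real.sqrt_pos.2 (by linarith)
  have hbound : ∀ u ∈ Icc 0 T, ‖2 / (g u - W u)‖ ≤ 2 / √(w.im ^ 2 - 4 * T) := fun u hu =>
    Complex.norm_two_div_le_of_le_im hc (by simpa using hg.sqrt_im_sq_sub_le_im hu)
  have hmvt := (convex_Icc 0 T).norm_image_sub_le_of_norm_hasDerivWithin_le
    (fun u hu => (hg.2 u hu).1) hbound hs ht
  rwa [Real.norm_eq_abs, abs_of_nonneg (sub_nonneg.2 hst), ← mul_div_right_comm] at hmvt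

theorem loewner_lipschitz_in_time (T : ℝ) (hT : 0 ≤ T) (W : ℝ → ℝ)
    (hW : ContinuousOn W (Icc 0 T)) (w : ℂ) (hw : 0 < w.im) (hw4 : w.im ^ 2 > 4 * T)
    (g : ℝ → ℂ) (hg : IsLoewnerSolution T W w g) :
    ∀ s ∈ Icc 0 T, ∀ t ∈ Icc 0 T, s ≤ t →
      ‖g t - g s‖ ≤ 2 * (t - s) / Real.sqrt (w.im ^ 2 - 4 * T) :=
  loewner_lipschitz_in_time_general T W w hw4 g hg
end

section
/- Let T > 0, let W₁, W₂ : [0,T] → ℝ be continuous, let w ∈ ℂ with Im w ≥ 3√T, and let g₁, g₂ be solutions of the chordal Loewner ODE started at w on [0,T] with driving functions W₁ and W₂ respectively. Then for all t ∈ [0,T], |g₁(t) − g₂(t)| ≤ (sup_{s ∈ [0,T]} |W₁(s) − W₂(s)|) · (exp(2t/(5T)) − 1). In particular, if a sequence of driving functions converges uniformly on [0,T], then the corresponding Loewner flows evaluated at w converge uniformly on [0,T], and the solution started at w is unique. -/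
open Set

/-!
Along a Loewner flow `d/dt (Im g)² = -4 (Im g)² / |g - W|² ≥ -4`, so `(Im g t)² ≥ (Im w)² - 4t`;
for `Im w ≥ 3√T` both flows stay above height `√(5T)` on `[0,T]`. There the Loewner vector field
`z ↦ 2 / (z - W)` is `2 / (5T)`-Lipschitz in `z` and in `W`, and Gronwall's inequality gives the
bound, which vanishes when `W₁ = W₂`.
-/

lemma Complex.neg_two_le_im_two_div_mul_im (z : ℂ) : -2 ≤ (2 / z).im * z.im := by
  rcases eq_or_ne z 0 with rfl | hz
  · simp
  have hpos : 0 < Complex.normSq z := Complex.normSq_pos.2 hz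
  have hratio : z.im ^ 2 / Complex.normSq z ≤ 1 :=
    (div_le_one hpos).2 (by rw [Complex.normSq_apply]; nlinarith [sq_nonneg z.re])
  have him : (2 / z).im * z.im = -2 * (z.im ^ 2 / Complex.normSq z) := by
    simp only [Complex.div_im, Complex.re_ofNat, Complex.im_ofNat]
    ring
  linarith

lemma Complex.norm_two_div_sub_two_div_le {a b : ℂ} {c : ℝ} (hc : 0 < c) (ha : c ≤ a.im)
    (hb : c ≤ b.im) : ‖2 / a - 2 / b‖ ≤ 2 / c ^ 2 * ‖a - b‖ := by
  have ha' : c ≤ ‖a‖ := ha.trans (Complex.im_le_norm a)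
  have hb' : c ≤ ‖b‖ := hb.trans (Complex.im_le_norm b)
  have ha0 : a ≠ 0 := norm_pos_iff.1 (hc.trans_le ha')
  have hb0 : b ≠ 0 := norm_pos_iff.1 (hc.trans_le hb')
  calc ‖2 / a - 2 / b‖ = 2 * ‖a - b‖ / (‖a‖ * ‖b‖) := by
        rw [div_sub_div _ _ ha0 hb0, show 2 * b - a * 2 = 2 * (b - a) by ring, norm_div,
          norm_mul, norm_mul, Complex.norm_two, norm_sub_rev]
    _ ≤ 2 * ‖a - b‖ / (c * c) := by gcongr
    _ = 2 / c ^ 2 * ‖a - b‖ := by ring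

namespace IsLoewnerSolution

variable {T : ℝ} {W : ℝ → ℝ} {w : ℂ} {g : ℝ → ℂ}

lemma continuousOn (hg : IsLoewnerSolution T W w g) : ContinuousOn g (Icc 0 T) :=
  fun t ht => (hg.2 t ht).1.continuousWithinAt

lemma hasDerivWithinAt_Ici (hg : IsLoewnerSolution T W w g) {t : ℝ} (ht : t ∈ Ico 0 T) :
    HasDerivWithinAt g (2 / (g t - (W t : ℂ))) (Ici t) t :=
  (hg.2 t (Ico_subset_Icc_self ht)).1.mono_of_mem_nhdsWithin (Icc_mem_nhdsGE_of_mem ht)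

lemma monotoneOn_sq_im_add (hg : IsLoewnerSolution T W w g) :
    MonotoneOn (fun t => (g t).im ^ 2 + 4 * t) (Icc 0 T) := by
  refine monotoneOn_of_hasDerivWithinAt_nonneg (convex_Icc 0 T)
    (f' := fun t => 2 * (g t).im ^ 1 * (2 / (g t - (W t : ℂ))).im + 4 * 1)
    (((Complex.continuous_im.comp_continuousOn hg.continuousOn).pow 2).add
      (continuousOn_const.mul continuousOn_id)) (fun t ht => ?_) (fun t _ => ?_)
  · have hderiv := ((hg.2 t (interior_subset ht)).1.mono interior_subset)
    exact ((Complex.imCLM.hasFDerivAt.comp_hasDerivWithinAt t hderiv).pow 2).add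
      ((hasDerivWithinAt_id t _).const_mul 4)
  · have := Complex.neg_two_le_im_two_div_mul_im (g t - (W t : ℂ))
    simp only [Complex.sub_im, Complex.ofReal_im, sub_zero] at this
    linarith

lemma sqrt_sq_im_sub_le_im (hg : IsLoewnerSolution T W w g) {t : ℝ} (ht : t ∈ Icc 0 T) :
    Real.sqrt (w.im ^ 2 - 4 * t) ≤ (g t).im := by
  have hmono := hg.monotoneOn_sq_im_add (left_mem_Icc.2 (ht.1.trans ht.2)) ht ht.1
  simp only [hg.1, mul_zero, add_zero] at hmono
  calc Real.sqrt (w.im ^ 2 - 4 * t) ≤ Real.sqrt ((g t).im ^ 2) :=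
        Real.sqrt_le_sqrt (by linarith)
    _ = (g t).im := Real.sqrt_sq (hg.2 t ht).2.le

lemma sqrt_five_mul_le_im (hg : IsLoewnerSolution T W w g) (hw : 3 * Real.sqrt T ≤ w.im)
    {t : ℝ} (ht : t ∈ Icc 0 T) : Real.sqrt (5 * T) ≤ (g t).im := by
  have hT : 0 ≤ T := ht.1.trans ht.2
  have hw2 : 9 * T ≤ w.im ^ 2 := by
    have := pow_le_pow_left₀ (by positivity) hw 2
    rwa [mul_pow, Real.sq_sqrt hT, show (3 : ℝ) ^ 2 = 9 by norm_num] at this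
  exact (Real.sqrt_le_sqrt (by linarith [ht.2])).trans (hg.sqrt_sq_im_sub_le_im ht)

theorem norm_sub_le_of_le_im {c M : ℝ} {W₁ W₂ : ℝ → ℝ} {g₁ g₂ : ℝ → ℂ}
    (hg₁ : IsLoewnerSolution T W₁ w g₁) (hg₂ : IsLoewnerSolution T W₂ w g₂) (hc : 0 < c)
    (hc₁ : ∀ t ∈ Icc 0 T, c ≤ (g₁ t).im) (hc₂ : ∀ t ∈ Icc 0 T, c ≤ (g₂ t).im)
    (hM : ∀ t ∈ Icc 0 T, |W₁ t - W₂ t| ≤ M) {t : ℝ} (ht : t ∈ Icc 0 T) :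
    ‖g₁ t - g₂ t‖ ≤ M * (Real.exp (2 * t / c ^ 2) - 1) := by
  set K := 2 / c ^ 2 with hK
  have hK0 : K ≠ 0 := by positivity
  have hbound : ∀ x ∈ Ico 0 T, ‖2 / (g₁ x - W₁ x) - 2 / (g₂ x - W₂ x)‖
      ≤ K * ‖g₁ x - g₂ x‖ + K * M := by
    intro x hx
    have hx' := Ico_subset_Icc_self hx
    calc _ ≤ K * ‖(g₁ x - W₁ x) - (g₂ x - W₂ x)‖ :=
          Complex.norm_two_div_sub_two_div_le hc (by simpa using hc₁ x hx')
            (by simpa using hc₂ x hx')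
      _ ≤ K * (‖g₁ x - g₂ x‖ + M) := by
          gcongr
          calc _ = ‖(g₁ x - g₂ x) - ((W₁ x - W₂ x : ℝ) : ℂ)‖ := by
                congr 1; push_cast; ring
            _ ≤ ‖g₁ x - g₂ x‖ + ‖((W₁ x - W₂ x : ℝ) : ℂ)‖ := norm_sub_le _ _
            _ ≤ _ := by rw [Complex.norm_real, Real.norm_eq_abs]; linarith [hM x hx']
      _ = _ := by ring
  have := norm_le_gronwallBound_of_norm_deriv_right_le (hg₁.continuousOn.sub hg₂.continuousOn)
    (fun x hx => (hg₁.hasDerivWithinAt_Ici hx).sub (hg₂.hasDerivWithinAt_Ici hx))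
    (δ := 0) (by rw [Pi.sub_apply, hg₁.1, hg₂.1, sub_self, norm_zero]) hbound t ht
  rw [gronwallBound_of_K_ne_0 hK0] at this
  simp only [Pi.sub_apply, sub_zero, zero_mul, zero_add, mul_div_cancel_left₀ M hK0] at this
  rwa [hK, div_mul_eq_mul_div] at this

end IsLoewnerSolution

theorem loewner_continuity_in_driving_term (T : ℝ) (hT : 0 < T)
    (W₁ W₂ : ℝ → ℝ) (hW₁ : ContinuousOn W₁ (Icc 0 T)) (hW₂ : ContinuousOn W₂ (Icc 0 T))
    (w : ℂ) (hw : w.im ≥ 3 * Real.sqrt T) (g₁ g₂ : ℝ → ℂ)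
    (hg₁ : IsLoewnerSolution T W₁ w g₁) (hg₂ : IsLoewnerSolution T W₂ w g₂) :
    (∀ t ∈ Icc 0 T,
      ‖g₁ t - g₂ t‖ ≤
        sSup ((fun s => |W₁ s - W₂ s|) '' Icc 0 T) * (Real.exp (2 * t / (5 * T)) - 1)) ∧
    ((∀ s ∈ Icc 0 T, W₁ s = W₂ s) → ∀ t ∈ Icc 0 T, g₁ t = g₂ t) := by
  have hc : 0 < Real.sqrt (5 * T) := by positivity
  have hc₁ := fun t (ht : t ∈ Icc 0 T) => hg₁.sqrt_five_mul_le_im hw ht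
  have hc₂ := fun t (ht : t ∈ Icc 0 T) => hg₂.sqrt_five_mul_le_im hw ht
  have hsq : Real.sqrt (5 * T) ^ 2 = 5 * T := Real.sq_sqrt (by positivity)
  have hbdd : BddAbove ((fun s => |W₁ s - W₂ s|) '' Icc 0 T) :=
    isCompact_Icc.bddAbove_image (hW₁.sub hW₂).abs
  refine ⟨fun t ht => ?_, fun hW t ht => ?_⟩
  · simpa only [hsq] using hg₁.norm_sub_le_of_le_im hg₂ hc hc₁ hc₂
      (fun s hs => le_csSup hbdd (mem_image_of_mem _ hs)) ht
  · have := hg₁.norm_sub_le_of_le_im hg₂ hc hc₁ hc₂ (M := 0) (fun s hs => by simp [hW s hs]) ht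
    rwa [zero_mul, norm_le_zero_iff, sub_eq_zero] at this
end

section
/- Let T ≥ 0, let W : [0,T] → ℝ be continuous, let w ∈ ℂ with Im w > 0 and (Im w)² > 4T, and let g be a solution of the chordal Loewner ODE started at w on [0,T]. Let u : [0,T] → ℂ be differentiable with u(0) = 1 and u'(t) = −2·u(t)/(g(t) − W(t))² for all t ∈ [0,T] (the derivative flow of the Loewner equation). Then for all t ∈ [0,T], |u(t)| ≤ Im w / √((Im w)² − 4t). -/
open Set

/-!
Write `z = g - W` and `y = Im g`. The Loewner equation gives `y' = -2y/|z|²`, and `y ≤ |z|`, so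
`(y²)' ≥ -4`: hence `y(t)² ≥ (Im w)² - 4t`. The derivative flow has `|u'| = 2|u|/|z|²`, so
`|u'| y + |u| y' ≤ 0` and `|u| y` is nonincreasing: `|u(t)| y(t) ≤ Im w`. Dividing gives the bound.
-/

-- Squaring avoids differentiating `‖u‖` where `u` vanishes.
theorem antitoneOn_norm_sq_mul_sq {E : Type*} [NormedAddCommGroup E] [InnerProductSpace ℝ E]
    {s : Set ℝ} (hs : Convex ℝ s) {u u' : ℝ → E} {y y' : ℝ → ℝ}
    (hu : ∀ t ∈ s, HasDerivWithinAt u (u' t) s t) (hy : ∀ t ∈ s, HasDerivWithinAt y (y' t) s t)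
    (hy0 : ∀ t ∈ s, 0 ≤ y t) (hbound : ∀ t ∈ s, ‖u' t‖ * y t + ‖u t‖ * y' t ≤ 0) :
    AntitoneOn (fun t => ‖u t‖ ^ 2 * y t ^ 2) s := by
  have hderiv : ∀ t ∈ s, HasDerivWithinAt (fun t => ‖u t‖ ^ 2 * y t ^ 2)
      (2 * inner ℝ (u t) (u' t) * y t ^ 2 + ‖u t‖ ^ 2 * (2 * y t * y' t)) s t := fun t ht =>
    ((hu t ht).norm_sq.fun_mul ((hy t ht).fun_pow 2)).congr_deriv (by push_cast; ring)
  refine antitoneOn_of_hasDerivWithinAt_nonpos hs (fun t ht => (hderiv t ht).continuousWithinAt)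
    (fun t ht => (hderiv t (interior_subset ht)).mono interior_subset) (fun t ht => ?_)
  replace ht := interior_subset ht
  have hy0 := hy0 t ht
  calc 2 * inner ℝ (u t) (u' t) * y t ^ 2 + ‖u t‖ ^ 2 * (2 * y t * y' t)
      ≤ 2 * (‖u t‖ * ‖u' t‖) * y t ^ 2 + ‖u t‖ ^ 2 * (2 * y t * y' t) := by
        gcongr; exact real_inner_le_norm _ _
    _ = 2 * ‖u t‖ * y t * (‖u' t‖ * y t + ‖u t‖ * y' t) := by ring
    _ ≤ 0 := mul_nonpos_of_nonneg_of_nonpos (by positivity) (hbound t ht)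

theorem le_div_sqrt_of_sq_mul_le {x a b : ℝ} (ha : 0 < a) (hb : 0 ≤ b) (h : x ^ 2 * a ≤ b ^ 2) :
    x ≤ b / √a := by
  rw [le_div_iff₀ (Real.sqrt_pos.2 ha)]
  refine (abs_le_of_sq_le_sq' ?_ hb).2
  rwa [mul_pow, Real.sq_sqrt ha.le]

theorem Complex.im_two_div (z : ℂ) : (2 / z).im = -2 * z.im / ‖z‖ ^ 2 := by
  rw [Complex.div_im, Complex.sq_norm]
  simp only [Complex.im_ofNat, Complex.re_ofNat, zero_mul, zero_div, zero_sub]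
  ring

section Loewner

variable {s : Set ℝ} {W : ℝ → ℝ} {g : ℝ → ℂ}

theorem hasDerivWithinAt_im_of_loewner {t : ℝ} (h : HasDerivWithinAt g (2 / (g t - W t)) s t) :
    HasDerivWithinAt (fun t => (g t).im) (-2 * (g t).im / ‖g t - W t‖ ^ 2) s t := by
  refine (Complex.imCLM.hasFDerivAt.comp_hasDerivWithinAt t h).congr_deriv ?_
  simp [Complex.im_two_div]

theorem monotoneOn_im_sq_add_of_loewner (hs : Convex ℝ s)
    (hg : ∀ t ∈ s, HasDerivWithinAt g (2 / (g t - W t)) s t) :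
    MonotoneOn (fun t => (g t).im ^ 2 + 4 * t) s := by
  have hderiv : ∀ t ∈ s, HasDerivWithinAt (fun t => (g t).im ^ 2 + 4 * t)
      (4 * (1 - (g t).im ^ 2 / ‖g t - W t‖ ^ 2)) s t := fun t ht => by
    refine (((hasDerivWithinAt_im_of_loewner (hg t ht)).fun_pow 2).fun_add
      ((hasDerivWithinAt_id t s).const_mul 4)).congr_deriv ?_
    push_cast; ring
  refine monotoneOn_of_hasDerivWithinAt_nonneg hs (fun t ht => (hderiv t ht).continuousWithinAt)
    (fun t ht => (hderiv t (interior_subset ht)).mono interior_subset) (fun t _ => ?_)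
  have h := Complex.abs_im_le_norm (g t - W t)
  have him : (g t).im ^ 2 ≤ ‖g t - W t‖ ^ 2 := by
    simpa using sq_le_sq' (neg_le_of_abs_le h) (le_of_abs_le h)
  have := div_le_one_of_le₀ him (by positivity)
  linarith

theorem antitoneOn_norm_sq_mul_im_sq_of_loewner (hs : Convex ℝ s)
    (hg : ∀ t ∈ s, HasDerivWithinAt g (2 / (g t - W t)) s t) (him : ∀ t ∈ s, 0 ≤ (g t).im)
    {u : ℝ → ℂ} (hu : ∀ t ∈ s, HasDerivWithinAt u (-2 * u t / (g t - W t) ^ 2) s t) :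
    AntitoneOn (fun t => ‖u t‖ ^ 2 * (g t).im ^ 2) s := by
  refine antitoneOn_norm_sq_mul_sq hs hu (fun t ht => hasDerivWithinAt_im_of_loewner (hg t ht))
    him fun t _ => le_of_eq ?_
  rw [norm_div, norm_mul, norm_pow, norm_neg, Complex.norm_ofNat]
  ring

end Loewner

theorem loewner_derivative_flow_bound_general (T : ℝ) (W : ℝ → ℝ)
    (w : ℂ) (hw4 : w.im ^ 2 > 4 * T)
    (g : ℝ → ℂ) (hg : IsLoewnerSolution T W w g) (u : ℝ → ℂ) (hu0 : u 0 = 1)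
    (hu : ∀ t ∈ Icc 0 T,
      HasDerivWithinAt u (-2 * u t / (g t - (W t : ℂ)) ^ 2) (Icc 0 T) t) :
    ∀ t ∈ Icc 0 T, ‖u t‖ ≤ w.im / Real.sqrt (w.im ^ 2 - 4 * t) := by
  obtain ⟨rfl, hg⟩ := hg
  intro t ht
  have h0 : (0 : ℝ) ∈ Icc 0 T := ⟨le_rfl, ht.1.trans ht.2⟩
  have hlower : (g 0).im ^ 2 - 4 * t ≤ (g t).im ^ 2 := by
    have := monotoneOn_im_sq_add_of_loewner (convex_Icc 0 T) (fun t ht => (hg t ht).1) h0 ht ht.1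
    simp only [mul_zero, add_zero] at this
    linarith
  have hupper : ‖u t‖ ^ 2 * (g t).im ^ 2 ≤ (g 0).im ^ 2 := by
    simpa [hu0] using antitoneOn_norm_sq_mul_im_sq_of_loewner (convex_Icc 0 T)
      (fun t ht => (hg t ht).1) (fun t ht => (hg t ht).2.le) hu h0 ht ht.1
  refine le_div_sqrt_of_sq_mul_le (by linarith [ht.2]) (hg 0 h0).2.le ?_
  calc ‖u t‖ ^ 2 * ((g 0).im ^ 2 - 4 * t) ≤ ‖u t‖ ^ 2 * (g t).im ^ 2 := by gcongr
    _ ≤ (g 0).im ^ 2 := hupper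

theorem loewner_derivative_flow_bound (T : ℝ) (hT : 0 ≤ T) (W : ℝ → ℝ)
    (hW : ContinuousOn W (Icc 0 T)) (w : ℂ) (hw : 0 < w.im) (hw4 : w.im ^ 2 > 4 * T)
    (g : ℝ → ℂ) (hg : IsLoewnerSolution T W w g) (u : ℝ → ℂ) (hu0 : u 0 = 1)
    (hu : ∀ t ∈ Icc 0 T,
      HasDerivWithinAt u (-2 * u t / (g t - (W t : ℂ)) ^ 2) (Icc 0 T) t) :
    ∀ t ∈ Icc 0 T, ‖u t‖ ≤ w.im / Real.sqrt (w.im ^ 2 - 4 * t) :=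
  loewner_derivative_flow_bound_general T W w hw4 g hg u hu0 hu
end

section
/- Let t ≥ 0, x ∈ ℝ and C, R > 0, and let G be holomorphic on {w ∈ ℂ : |w| > R} with |G(w) − (w − x + 2t/w)| ≤ C·|w|⁻² for all |w| > R. Then there exist R'' ≥ R and C'' > 0 (depending only on R, C, x, t) such that for all w with |w| > R'' one has G(w) ≠ 0 and the derivative of −1/G satisfies |G'(w)/G(w)² − (1/w² + 2x/w³ + 3(x² − 2t)/w⁴)| ≤ C''·|w|⁻⁵. -/
/-!
Since `G w = w (1 + O(w⁻¹))`, the function `1 / G` is holomorphic near `∞` with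
`1 / G w = 1 / w + x / w ^ 2 + (x ^ 2 - 2 t) / w ^ 3 + O(w⁻⁴)`: the three terms are chosen so that
their product with `w - x + 2 t / w` is `1 + O(w⁻³)`. Differentiating, `-(1 / G)' = G' / G ^ 2`,
and Cauchy's estimate on the disc of radius `|w| / 2` about `w` turns the `O(w⁻⁴)` remainder of
`1 / G` into an `O(w⁻⁵)` remainder of its derivative.
-/

open Filter Topology Asymptotics Metric Bornology

section Cobounded

variable {𝕜 : Type*} [NormedField 𝕜]

theorem isBigO_inv_pow_mul_of_continuousAt {g : 𝕜 → 𝕜} (hg : ContinuousAt g 0) (k : ℕ) :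
    (fun w => w⁻¹ ^ k * g w⁻¹) =O[cobounded 𝕜] fun w => w⁻¹ ^ k := by
  simpa using (isBigO_refl (fun w : 𝕜 => w⁻¹ ^ k) _).mul
    ((hg.tendsto.comp tendsto_inv₀_cobounded).isBigO_one (F := 𝕜))

theorem exists_forall_norm_gt_of_isBigO_inv_pow {F : Type*} [NormedAddCommGroup F]
    {p : 𝕜 → Prop} {f : 𝕜 → F} {n : ℕ} (R : ℝ) (hp : ∀ᶠ w in cobounded 𝕜, p w)
    (hf : f =O[cobounded 𝕜] fun w => w⁻¹ ^ n) :
    ∃ R' : ℝ, R ≤ R' ∧ ∃ C' : ℝ, 0 < C' ∧ ∀ w : 𝕜, R' < ‖w‖ → p w ∧ ‖f w‖ ≤ C' / ‖w‖ ^ n := by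
  obtain ⟨C', hC', hfC⟩ := hf.exists_pos
  obtain ⟨R₀, -, hR₀⟩ := hasBasis_cobounded_norm.eventually_iff.mp (hp.and hfC.bound)
  refine ⟨max R R₀, le_max_left _ _, C', hC', fun w hw => ?_⟩
  obtain ⟨hpw, hfw⟩ := hR₀ ((le_max_right _ _).trans hw.le)
  simpa [div_eq_mul_inv] using And.intro hpw hfw

end Cobounded

theorem norm_deriv_le_of_norm_le_inv_pow {F : Type*} [NormedAddCommGroup F] [NormedSpace ℂ F]
    {f : ℂ → F} {R c : ℝ} {n : ℕ} {w : ℂ} (hw : w ≠ 0) (hRw : 2 * R ≤ ‖w‖)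
    (hf : ∀ z, R ≤ ‖z‖ → DifferentiableAt ℂ f z ∧ ‖f z‖ ≤ c * ‖z‖⁻¹ ^ n) :
    ‖deriv f w‖ ≤ 2 ^ (n + 1) * c * ‖w‖⁻¹ ^ (n + 1) := by
  set r := ‖w‖
  have hr : 0 < r := norm_pos_iff.mpr hw
  have hc : 0 ≤ c := by
    have := (norm_nonneg _).trans (hf w (by linarith)).2
    exact nonneg_of_mul_nonneg_left this (by positivity)
  have half_le_norm : ∀ z ∈ closedBall w (r / 2), r / 2 ≤ ‖z‖ := fun z hz => by
    have := norm_sub_norm_le w z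
    rw [mem_closedBall, dist_eq_norm, norm_sub_rev] at hz
    linarith
  have hdiff : DiffContOnCl ℂ f (ball w (r / 2)) :=
    DifferentiableOn.diffContOnCl fun z hz => by
      have hz := half_le_norm z (closure_ball_subset_closedBall hz)
      exact (hf z (by linarith)).1.differentiableWithinAt
  have hsphere : ∀ z ∈ sphere w (r / 2), ‖f z‖ ≤ c * (r / 2)⁻¹ ^ n := fun z hz => by
    have hz := half_le_norm z (sphere_subset_closedBall hz)
    calc ‖f z‖ ≤ c * ‖z‖⁻¹ ^ n := (hf z (by linarith)).2
      _ ≤ c * (r / 2)⁻¹ ^ n := by gcongr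
  calc ‖deriv f w‖ ≤ c * (r / 2)⁻¹ ^ n / (r / 2) :=
        Complex.norm_deriv_le_of_forall_mem_sphere_norm_le (by positivity) hdiff hsphere
    _ = 2 ^ (n + 1) * c * r⁻¹ ^ (n + 1) := by
        rw [inv_div, div_pow, pow_succ, pow_succ, inv_pow]
        field_simp

theorem isBigO_deriv_of_isBigO_inv_pow {F : Type*} [NormedAddCommGroup F] [NormedSpace ℂ F]
    {f : ℂ → F} {n : ℕ} (hf : ∀ᶠ z in cobounded ℂ, DifferentiableAt ℂ f z)
    (hO : f =O[cobounded ℂ] fun z => z⁻¹ ^ n) :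
    deriv f =O[cobounded ℂ] fun z => z⁻¹ ^ (n + 1) := by
  obtain ⟨c, hc⟩ := hO.bound
  obtain ⟨R, -, hR⟩ := hasBasis_cobounded_norm.eventually_iff.mp (hf.and hc)
  refine IsBigO.of_bound (2 ^ (n + 1) * c) ?_
  filter_upwards [eventually_cobounded_le_norm (max (2 * R) 1)] with w hw
  have hw0 : w ≠ 0 := norm_pos_iff.mp (by linarith [le_max_right (2 * R) 1])
  simpa using norm_deriv_le_of_norm_le_inv_pow hw0 ((le_max_left _ _).trans hw)
    fun z hz => by simpa using hR hz

section InverseExpansion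

variable {𝕜 : Type*} [NontriviallyNormedField 𝕜] {x t : 𝕜} {G : 𝕜 → 𝕜}

theorem tendsto_mul_inv_of_isBigO_sub
    (hE : (fun w => G w - (w - x + 2 * t / w)) =O[cobounded 𝕜] fun w => w⁻¹ ^ 2) :
    Tendsto (fun w => G w * w⁻¹) (cobounded 𝕜) (𝓝 1) := by
  have hE0 : Tendsto (fun w => G w - (w - x + 2 * t / w)) (cobounded 𝕜) (𝓝 0) :=
    hE.trans_tendsto (by simpa using (tendsto_inv₀_cobounded (α := 𝕜)).pow 2)
  have hlim : Tendsto (fun w => (1 - x * w⁻¹ + 2 * t * w⁻¹ ^ 2)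
      + (G w - (w - x + 2 * t / w)) * w⁻¹) (cobounded 𝕜) (𝓝 1) := by
    have hu := tendsto_inv₀_cobounded (α := 𝕜)
    simpa using ((tendsto_const_nhds.sub (hu.const_mul x)).add
      ((hu.pow 2).const_mul (2 * t))).add (hE0.mul hu)
  refine hlim.congr' ?_
  filter_upwards [eventually_ne_cobounded 0] with w hw
  field_simp
  ring

theorem eventually_ne_zero_of_isBigO_sub
    (hE : (fun w => G w - (w - x + 2 * t / w)) =O[cobounded 𝕜] fun w => w⁻¹ ^ 2) :
    ∀ᶠ w in cobounded 𝕜, G w ≠ 0 :=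
  ((tendsto_mul_inv_of_isBigO_sub hE).eventually_ne one_ne_zero).mono
    fun _ h => left_ne_zero_of_mul h

theorem isBigO_inv_of_isBigO_sub
    (hE : (fun w => G w - (w - x + 2 * t / w)) =O[cobounded 𝕜] fun w => w⁻¹ ^ 2) :
    (fun w => (G w)⁻¹) =O[cobounded 𝕜] fun w => w⁻¹ := by
  have hlim := ((tendsto_mul_inv_of_isBigO_sub hE).inv₀ one_ne_zero).isBigO_one (F := 𝕜)
  have hprod : (fun w => w⁻¹ * (G w * w⁻¹)⁻¹) =O[cobounded 𝕜] fun w => w⁻¹ := by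
    simpa using (isBigO_refl (fun w : 𝕜 => w⁻¹) _).mul hlim
  refine hprod.congr' ?_ .rfl
  filter_upwards [eventually_ne_cobounded 0] with w hw
  field_simp

theorem isBigO_inv_sub_of_isBigO_sub
    (hE : (fun w => G w - (w - x + 2 * t / w)) =O[cobounded 𝕜] fun w => w⁻¹ ^ 2) :
    (fun w => (G w)⁻¹ - (1 / w + x / w ^ 2 + (x ^ 2 - 2 * t) / w ^ 3))
      =O[cobounded 𝕜] fun w => w⁻¹ ^ 4 := by
  have hS : (fun w : 𝕜 => w⁻¹ ^ 1 * (1 + x * w⁻¹ + (x ^ 2 - 2 * t) * w⁻¹ ^ 2))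
      =O[cobounded 𝕜] fun w => w⁻¹ ^ 1 :=
    isBigO_inv_pow_mul_of_continuousAt (g := fun u => 1 + x * u + (x ^ 2 - 2 * t) * u ^ 2)
      (by fun_prop) 1
  -- With `S` the function bounded by `hS` and `P w = w - x + 2 t / w`, we have
  -- `G⁻¹ - S = G⁻¹ ((1 - S P) - S (G - P))`
  -- and `1 - S P = -w⁻³ (4 t x - x³ + 2 t (x² - 2 t) w⁻¹)`.
  have hSP : (fun w : 𝕜 => w⁻¹ ^ 3 * ((4 * t * x - x ^ 3) + 2 * t * (x ^ 2 - 2 * t) * w⁻¹))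
      =O[cobounded 𝕜] fun w => w⁻¹ ^ 3 :=
    isBigO_inv_pow_mul_of_continuousAt
      (g := fun u => (4 * t * x - x ^ 3) + 2 * t * (x ^ 2 - 2 * t) * u) (by fun_prop) 3
  have hSE : _ =O[cobounded 𝕜] fun w : 𝕜 => w⁻¹ ^ 3 :=
    (hS.mul hE).congr_right fun w => by ring
  have hsum := (isBigO_inv_of_isBigO_sub hE).mul (hSP.neg_left.sub hSE)
  refine hsum.congr' ?_ ?_
  · filter_upwards [eventually_ne_cobounded 0, eventually_ne_zero_of_isBigO_sub hE]
      with w hw hG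
    field_simp
    ring
  · filter_upwards with w
    ring

theorem hasDerivAt_div_add_div_sq_add_div_cube (a b c : 𝕜) {w : 𝕜} (hw : w ≠ 0) :
    HasDerivAt (fun w => a / w + b / w ^ 2 + c / w ^ 3)
      (-(a / w ^ 2 + 2 * b / w ^ 3 + 3 * c / w ^ 4)) w := by
  have hpow (k : ℕ) (d : 𝕜) : HasDerivAt (fun y => d / y ^ k)
      ((0 * w ^ k - d * (k * w ^ (k - 1))) / (w ^ k) ^ 2) w :=
    (hasDerivAt_const w d).div (hasDerivAt_pow k w) (pow_ne_zero k hw)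
  have hsum := ((hpow 1 a).add (hpow 2 b)).add (hpow 3 c)
  simp only [pow_one] at hsum
  refine hsum.congr_deriv ?_
  field_simp
  ring

end InverseExpansion

theorem isBigO_deriv_div_sq_sub {x t : ℂ} {G : ℂ → ℂ}
    (hdiff : ∀ᶠ w in cobounded ℂ, DifferentiableAt ℂ G w)
    (hE : (fun w => G w - (w - x + 2 * t / w)) =O[cobounded ℂ] fun w => w⁻¹ ^ 2) :
    (fun w => deriv G w / G w ^ 2 - (1 / w ^ 2 + 2 * x / w ^ 3 + 3 * (x ^ 2 - 2 * t) / w ^ 4))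
      =O[cobounded ℂ] fun w => w⁻¹ ^ 5 := by
  have hH : ∀ᶠ w in cobounded ℂ, HasDerivAt
      (fun w => (G w)⁻¹ - (1 / w + x / w ^ 2 + (x ^ 2 - 2 * t) / w ^ 3))
      (-deriv G w / G w ^ 2 + (1 / w ^ 2 + 2 * x / w ^ 3 + 3 * (x ^ 2 - 2 * t) / w ^ 4)) w := by
    filter_upwards [hdiff, eventually_ne_zero_of_isBigO_sub hE, eventually_ne_cobounded 0]
      with w hGd hG0 hw
    exact ((hGd.hasDerivAt.inv hG0).sub
      (hasDerivAt_div_add_div_sq_add_div_cube 1 x (x ^ 2 - 2 * t) hw)).congr_deriv (by ring)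
  have hderiv := isBigO_deriv_of_isBigO_inv_pow (hH.mono fun _ h => h.differentiableAt)
    (isBigO_inv_sub_of_isBigO_sub hE)
  refine hderiv.neg_left.congr' ?_ .rfl
  filter_upwards [hH] with w hw
  rw [hw.deriv]
  ring

theorem derivative_expansion_general (t x : ℝ) (C R : ℝ)
    (G : ℂ → ℂ) (hhol : DifferentiableOn ℂ G {w : ℂ | R < ‖w‖})
    (hG : ∀ w : ℂ, R < ‖w‖ →
      ‖G w - (w - (x : ℂ) + 2 * (t : ℂ) / w)‖ ≤ C / ‖w‖ ^ 2) :
    ∃ R'' : ℝ, R ≤ R'' ∧ ∃ C'' : ℝ, 0 < C'' ∧ ∀ w : ℂ, R'' < ‖w‖ →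
      G w ≠ 0 ∧
      ‖deriv G w / (G w) ^ 2 -
          (1 / w ^ 2 + 2 * (x : ℂ) / w ^ 3 + 3 * ((x : ℂ) ^ 2 - 2 * (t : ℂ)) / w ^ 4)‖
        ≤ C'' / ‖w‖ ^ 5 := by
  have hfar : ∀ᶠ w in cobounded ℂ, R < ‖w‖ :=
    (eventually_cobounded_le_norm (R + 1)).mono fun _ h => by linarith
  have hE : (fun w => G w - (w - x + 2 * t / w)) =O[cobounded ℂ] fun w => w⁻¹ ^ 2 :=
    IsBigO.of_bound C <| hfar.mono fun w hw => by simpa [div_eq_mul_inv] using hG w hw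
  have hdiff : ∀ᶠ w in cobounded ℂ, DifferentiableAt ℂ G w :=
    hfar.mono fun w hw =>
      hhol.differentiableAt ((isOpen_lt continuous_const continuous_norm).mem_nhds hw)
  exact exists_forall_norm_gt_of_isBigO_inv_pow R (eventually_ne_zero_of_isBigO_sub hE)
    (isBigO_deriv_div_sq_sub hdiff hE)

theorem derivative_expansion (t x : ℝ) (ht : 0 ≤ t) (C R : ℝ) (hC : 0 < C) (hR : 0 < R)
    (G : ℂ → ℂ) (hhol : DifferentiableOn ℂ G {w : ℂ | R < ‖w‖})
    (hG : ∀ w : ℂ, R < ‖w‖ →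
      ‖G w - (w - (x : ℂ) + 2 * (t : ℂ) / w)‖ ≤ C / ‖w‖ ^ 2) :
    ∃ R'' : ℝ, R ≤ R'' ∧ ∃ C'' : ℝ, 0 < C'' ∧ ∀ w : ℂ, R'' < ‖w‖ →
      G w ≠ 0 ∧
      ‖deriv G w / (G w) ^ 2 -
          (1 / w ^ 2 + 2 * (x : ℂ) / w ^ 3 + 3 * ((x : ℂ) ^ 2 - 2 * (t : ℂ)) / w ^ 4)‖
        ≤ C'' / ‖w‖ ^ 5 :=
  derivative_expansion_general t x C R G hhol hG
end

section
/- Let (Ω, 𝓕, (𝓕_t)_{t≥0}, ℙ) be a filtered probability space and let (W_t)_{t≥0} be an adapted real-valued process such that W_t and W_t² are integrable for every t. Suppose there is a sequence (w_n) of nonzero complex numbers with |w_n| → ∞ and, for each n, an adapted complex-valued process (R^n_t)_{t≥0} such that for each t there is a constant C_t < ∞ with |R^n_t| ≤ C_t·|w_n|⁻³ almost surely for all n, and such that for each n the complex-valued process M^n_t = 1 + W_t/w_n + (W_t² − 3t)/w_n² + R^n_t is a martingale with respect to (𝓕_t). Then (W_t)_{t≥0} and (W_t² − 3t)_{t≥0}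 are martingales with respect to (𝓕_t). -/
/-!
Fix `s ≤ t` and `A ∈ 𝓕_s`. Integrating `Mⁿ` over `A` at times `s` and `t` and subtracting gives
`Δa / wₙ + Δb / wₙ² + ρₙ = 0`, where `Δa`, `Δb` are the increments of `∫_A W` and
`∫_A (W² - 3t)` and `ρₙ = O(|wₙ|⁻³)` by the uniform bound on `Rⁿ`. Multiplying by `wₙ` and
letting `n → ∞` forces `Δa = 0`; multiplying then by `wₙ²` forces `Δb = 0`. Equality of these set
integrals over all `A ∈ 𝓕_s` is the martingale property.
-/

open MeasureTheory Filter Topology Asymptotics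

section
variable {𝕜 ι : Type*} [NormedField 𝕜] {l : Filter ι} {w r : ι → 𝕜}

lemma eventually_ne_zero_of_tendsto_norm_atTop (hw : Tendsto (‖w ·‖) l atTop) :
    ∀ᶠ i in l, w i ≠ 0 :=
  (hw.eventually_gt_atTop 0).mono fun _ => norm_pos_iff.mp

lemma tendsto_inv_pow_zero_of_tendsto_norm_atTop (hw : Tendsto (‖w ·‖) l atTop) {m : ℕ}
    (hm : m ≠ 0) : Tendsto (fun i => (w i ^ m)⁻¹) l (𝓝 0) := by
  refine tendsto_inv₀_cobounded.comp (tendsto_norm_atTop_iff_cobounded.mp ?_)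
  simp only [norm_pow]
  exact (tendsto_pow_atTop hm).comp hw

lemma tendsto_mul_pow_zero_of_isBigO_inv_pow (hw : Tendsto (‖w ·‖) l atTop) {k n : ℕ}
    (hkn : k < n) (hr : r =O[l] fun i => (w i ^ n)⁻¹) :
    Tendsto (fun i => r i * w i ^ k) l (𝓝 0) := by
  have hw0 := eventually_ne_zero_of_tendsto_norm_atTop hw
  refine ((hr.mul (isBigO_refl (fun i => w i ^ k) l)).trans_eventuallyEq ?_).trans_tendsto
    (tendsto_inv_pow_zero_of_tendsto_norm_atTop hw (Nat.sub_ne_zero_of_lt hkn))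
  filter_upwards [hw0] with i hi
  rw [← pow_sub_mul_pow (w i) hkn.le, mul_inv, mul_assoc, inv_mul_cancel₀ (pow_ne_zero _ hi),
    mul_one]

theorem eq_zero_of_div_add_div_sq_add_eq_zero [l.NeBot] {a b : 𝕜}
    (hw : Tendsto (‖w ·‖) l atTop) (hr : r =O[l] fun i => (w i ^ 3)⁻¹)
    (h : ∀ᶠ i in l, a / w i + b / w i ^ 2 + r i = 0) :
    a = 0 ∧ b = 0 := by
  have hw0 := eventually_ne_zero_of_tendsto_norm_atTop hw
  have ha : a = 0 := by
    have hlim : Tendsto (fun i => a + b * (w i ^ 1)⁻¹ + r i * w i ^ 1) l (𝓝 a) := by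
      simpa using ((tendsto_inv_pow_zero_of_tendsto_norm_atTop hw one_ne_zero).const_mul b
        |>.const_add a).add
          (tendsto_mul_pow_zero_of_isBigO_inv_pow hw (k := 1) (by norm_num) hr)
    refine tendsto_nhds_unique hlim (tendsto_const_nhds.congr' ?_)
    filter_upwards [h, hw0] with i hi hwi
    field_simp at hi ⊢
    linear_combination -hi
  have hb : Tendsto (fun i => b + r i * w i ^ 2) l (𝓝 b) := by
    simpa using (tendsto_mul_pow_zero_of_isBigO_inv_pow hw (k := 2) (by norm_num) hr).const_add b
  refine ⟨ha, tendsto_nhds_unique hb (tendsto_const_nhds.congr' ?_)⟩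
  filter_upwards [h, hw0] with i hi hwi
  rw [ha] at hi
  field_simp at hi ⊢
  linear_combination -hi
end

section
variable {Ω ι : Type*} {m : MeasurableSpace Ω} {μ : Measure Ω} [IsFiniteMeasure μ]

lemma martingale_of_forall_setIntegral_eq {E : Type*} [NormedAddCommGroup E] [NormedSpace ℝ E]
    [CompleteSpace E] [Preorder ι] {𝓕 : Filtration ι m} {f : ι → Ω → E}
    (hadp : StronglyAdapted 𝓕 f) (hint : ∀ i, Integrable (f i) μ)
    (hf : ∀ i j, i ≤ j → ∀ A, MeasurableSet[𝓕 i] A → ∫ ω in A, f i ω ∂μ = ∫ ω in A, f j ω ∂μ) :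
    Martingale f 𝓕 μ :=
  ⟨hadp, fun i j hij => (ae_eq_condExp_of_forall_setIntegral_eq (𝓕.le i) (hint j)
    (fun _ _ _ => (hint i).integrableOn) (fun A hA _ => hf i j hij A hA)
    (hadp i).aestronglyMeasurable).symm⟩

lemma isBigO_setIntegral_of_ae_norm_le {E F : Type*} [NormedAddCommGroup E] [NormedSpace ℝ E]
    [Norm F] {l : Filter ι} {f : ι → Ω → E} {g : ι → F} (C : ℝ)
    (h : ∀ i, ∀ᵐ ω ∂μ, ‖f i ω‖ ≤ C * ‖g i‖) (A : Set Ω) :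
    (fun i => ∫ ω in A, f i ω ∂μ) =O[l] g := by
  refine IsBigO.of_bound (C * μ.real A) (Eventually.of_forall fun i => ?_)
  have := norm_integral_le_of_norm_le_const (ae_restrict_of_ae (h i)) (μ := μ.restrict A)
  rwa [measureReal_restrict_apply_univ, mul_right_comm] at this

lemma setIntegral_one_add_div_add_div_sq_add {X Y : Ω → ℝ} {R : Ω → ℂ} (hX : Integrable X μ)
    (hY : Integrable Y μ) (hR : Integrable R μ) (w : ℂ) (A : Set Ω) :
    ∫ ω in A, (1 + (X ω : ℂ) / w + (Y ω : ℂ) / w ^ 2 + R ω) ∂μ =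
      μ.real A + ((∫ ω in A, X ω ∂μ : ℝ) : ℂ) / w + ((∫ ω in A, Y ω ∂μ : ℝ) : ℂ) / w ^ 2
        + ∫ ω in A, R ω ∂μ := by
  have hX' : Integrable (fun ω => (X ω : ℂ) / w) (μ.restrict A) :=
    (hX.ofReal.div_const w).restrict
  have hY' : Integrable (fun ω => (Y ω : ℂ) / w ^ 2) (μ.restrict A) :=
    (hY.ofReal.div_const (w ^ 2)).restrict
  have h1 := integrable_const (μ := μ.restrict A) (1 : ℂ)
  rw [integral_add _ hR.restrict, integral_add _ hY', integral_add h1 hX', integral_div,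
    integral_div, integral_complex_ofReal, integral_complex_ofReal, setIntegral_const]
  · simp
  · exact h1.add hX'
  · exact (h1.add hX').add hY'

theorem setIntegral_eq_of_martingale_expansion [Preorder ι] {𝓕 : Filtration ι m}
    {X Y : ι → Ω → ℝ} {R : ℕ → ι → Ω → ℂ} {w : ℕ → ℂ} (hw : Tendsto (‖w ·‖) atTop atTop)
    (hX : ∀ i, Integrable (X i) μ) (hY : ∀ i, Integrable (Y i) μ)
    (hR : ∀ i, ∃ C : ℝ, ∀ n, ∀ᵐ ω ∂μ, ‖R n i ω‖ ≤ C * ‖(w n ^ 3)⁻¹‖)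
    (hM : ∀ n, Martingale (fun i ω => 1 + (X i ω : ℂ) / w n + (Y i ω : ℂ) / w n ^ 2 + R n i ω) 𝓕 μ)
    {i j : ι} (hij : i ≤ j) {A : Set Ω} (hA : MeasurableSet[𝓕 i] A) :
    ∫ ω in A, X i ω ∂μ = ∫ ω in A, X j ω ∂μ ∧ ∫ ω in A, Y i ω ∂μ = ∫ ω in A, Y j ω ∂μ := by
  have hRint : ∀ n k, Integrable (R n k) μ := fun n k => by
    refine (((hM n).integrable k).sub (((integrable_const 1).add
      ((hX k).ofReal.div_const (w n))).add ((hY k).ofReal.div_const (w n ^ 2)))).congr ?_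
    exact ae_of_all _ fun ω => by simp
  obtain ⟨Ci, hCi⟩ := hR i
  obtain ⟨Cj, hCj⟩ := hR j
  have hρ := (isBigO_setIntegral_of_ae_norm_le Cj hCj A (l := atTop)).sub
    (isBigO_setIntegral_of_ae_norm_le Ci hCi A)
  have hincr : ∀ n, ((∫ ω in A, X j ω ∂μ - ∫ ω in A, X i ω ∂μ : ℝ) : ℂ) / w n
      + ((∫ ω in A, Y j ω ∂μ - ∫ ω in A, Y i ω ∂μ : ℝ) : ℂ) / w n ^ 2
      + ((∫ ω in A, R n j ω ∂μ) - ∫ ω in A, R n i ω ∂μ) = 0 := fun n => by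
    have := (hM n).setIntegral_eq hij hA
    simp only [setIntegral_one_add_div_add_div_sq_add (hX _) (hY _) (hRint _ _)] at this
    push_cast
    linear_combination -this
  obtain ⟨hX0, hY0⟩ :=
    eq_zero_of_div_add_div_sq_add_eq_zero hw hρ (Eventually.of_forall hincr)
  constructor <;> linarith [Complex.ofReal_eq_zero.mp hX0, Complex.ofReal_eq_zero.mp hY0]
end

theorem coefficient_extraction_general {Ω : Type*} {m : MeasurableSpace Ω}
    (μ : Measure Ω) [IsProbabilityMeasure μ] (𝓕 : Filtration NNReal m)
    (W : NNReal → Ω → ℝ) (hWadp : Adapted 𝓕 W)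
    (hWint : ∀ t, Integrable (W t) μ)
    (hW2int : ∀ t, Integrable (fun ω => W t ω ^ 2) μ)
    (wn : ℕ → ℂ)
    (hwn_lim : Tendsto (fun n => ‖wn n‖) atTop atTop)
    (R : ℕ → NNReal → Ω → ℂ)
    (hRbdd : ∀ t : NNReal, ∃ C : ℝ, ∀ n : ℕ,
      ∀ᵐ ω ∂μ, ‖R n t ω‖ ≤ C / ‖wn n‖ ^ 3)
    (hmart : ∀ n : ℕ, Martingale
      (fun (t : NNReal) (ω : Ω) =>
        1 + (W t ω : ℂ) / wn n + ((W t ω : ℂ) ^ 2 - 3 * ((t : ℝ) : ℂ)) / (wn n) ^ 2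
          + R n t ω) 𝓕 μ) :
    Martingale W 𝓕 μ ∧
      Martingale (fun (t : NNReal) (ω : Ω) => W t ω ^ 2 - 3 * (t : ℝ)) 𝓕 μ := by
  set Y : NNReal → Ω → ℝ := fun t ω => W t ω ^ 2 - 3 * (t : ℝ)
  have hYadp : Adapted 𝓕 Y := fun t => ((hWadp t).pow_const 2).sub_const _
  have hYint : ∀ t, Integrable (Y t) μ := fun t => (hW2int t).sub (integrable_const _)
  have hR : ∀ t, ∃ C : ℝ, ∀ n, ∀ᵐ ω ∂μ, ‖R n t ω‖ ≤ C * ‖(wn n ^ 3)⁻¹‖ := by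
    simpa only [norm_inv, norm_pow, div_eq_mul_inv] using hRbdd
  have hM : ∀ n, Martingale
      (fun t ω => 1 + (W t ω : ℂ) / wn n + (Y t ω : ℂ) / wn n ^ 2 + R n t ω) 𝓕 μ := by
    simpa only [Y, Complex.ofReal_sub, Complex.ofReal_pow, Complex.ofReal_mul,
      Complex.ofReal_ofNat] using hmart
  have hcoeffs {s t : NNReal} (hst : s ≤ t) {A : Set Ω} (hA : MeasurableSet[𝓕 s] A) :=
    setIntegral_eq_of_martingale_expansion hwn_lim hWint hYint hR hM hst hA
  exact ⟨martingale_of_forall_setIntegral_eq hWadp.stronglyAdapted hWint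
      fun _ _ hst _ hA => (hcoeffs hst hA).1,
    martingale_of_forall_setIntegral_eq hYadp.stronglyAdapted hYint
      fun _ _ hst _ hA => (hcoeffs hst hA).2⟩

/-- Coefficient-extraction: if `1 + W_t/wₙ + (W_t² − 3t)/wₙ² + Rⁿ_t` is a (complex)
martingale for a sequence `wₙ → ∞`, with `|Rⁿ_t| ≤ C_t |wₙ|⁻³` a.s., then `W_t` and
`W_t² − 3t` are martingales. -/
theorem coefficient_extraction {Ω : Type*} {m : MeasurableSpace Ω}
    (μ : Measure Ω) [IsProbabilityMeasure μ] (𝓕 : Filtration NNReal m)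
    (W : NNReal → Ω → ℝ) (hWadp : Adapted 𝓕 W)
    (hWint : ∀ t, Integrable (W t) μ)
    (hW2int : ∀ t, Integrable (fun ω => W t ω ^ 2) μ)
    (wn : ℕ → ℂ) (hwn : ∀ n, wn n ≠ 0)
    (hwn_lim : Tendsto (fun n => ‖wn n‖) atTop atTop)
    (R : ℕ → NNReal → Ω → ℂ) (hRadp : ∀ n, Adapted 𝓕 (R n))
    (hRbdd : ∀ t : NNReal, ∃ C : ℝ, ∀ n : ℕ,
      ∀ᵐ ω ∂μ, ‖R n t ω‖ ≤ C / ‖wn n‖ ^ 3)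
    (hmart : ∀ n : ℕ, Martingale
      (fun (t : NNReal) (ω : Ω) =>
        1 + (W t ω : ℂ) / wn n + ((W t ω : ℂ) ^ 2 - 3 * ((t : ℝ) : ℂ)) / (wn n) ^ 2
          + R n t ω) 𝓕 μ) :
    Martingale W 𝓕 μ ∧
      Martingale (fun (t : NNReal) (ω : Ω) => W t ω ^ 2 - 3 * (t : ℝ)) 𝓕 μ :=
  coefficient_extraction_general μ 𝓕 W hWadp hWint hW2int wn hwn_lim R hRbdd hmart
end
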